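/- Given a causal setting ⟨z, φ⟩ with achievement causal chain BSChain(C) (Batusov–Soutchanski) and counterfactual achievement cause z' (the minimal prefix cause), every action–prefix pair ⟨a, p⟩ in BSChain(C) satisfies p ++ [a] ⊆ z'. Hence BSChain(C) ⊆ Chain(z'), where Chain(z') = {⟨a, p⟩ : p ++ [a] is a prefix of z'}. -/

import Mathlib

theorem append_singleton_prefix_of_sat_between {A : Type*} {Sat : List A → Prop}
    {z z' p : List A} {a : A} (hz' : z' <+: z) (hpa : p ++ [a] <+: z) (hnp : ¬ Sat p)
    (hsat : ∀ z'', z' <+: z'' → z'' <+: z → Sat z'') :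
    p ++ [a] <+: z' := by
  rcases List.prefix_or_prefix_of_prefix hpa hz' with h | h
  · exact h
  · rcases List.prefix_concat_iff.mp h with rfl | hp
    · exact List.prefix_refl _
    · exact absurd (hsat p hp ((p.prefix_append [a]).trans hpa)) hnp

theorem bschain_subset_chain_general {A : Type*} (z z' : List A) (Sat : List A → Prop)
    (chain : List (A × List A)) (an : A) (pn : List A)
    (hz' : z' <+: z)
    -- condition (i) of the achievement cause
    (hcondi : ∀ z'', z' <+: z'' → z'' <+: z → Sat z'')
    -- ⟨aₙ, pₙ⟩ is a direct cause pair
    (hpa : (pn ++ [an]) <+: z)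
    (hnp : ¬ Sat pn)
    -- every pair of the chain occurs within the last pair
    (hwithin : ∀ pr ∈ chain, (pr.2 ++ [pr.1]) <+: (pn ++ [an])) :
    ∀ pr ∈ chain, (pr.2 ++ [pr.1]) <+: z' := fun pr hpr =>
  (hwithin pr hpr).trans (append_singleton_prefix_of_sat_between hz' hpa hnp hcondi)

/-- Every action–prefix pair in the Batusov–Soutchanski achievement causal chain
is contained (as a prefix `p ++ [a]`) in the counterfactual achievement cause `z'`,
hence `BSChain(C) ⊆ Chain(z')`. -/
theorem bschain_subset_chain {A : Type*} (z z' : List A) (Sat : List A → Prop)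
    (chain : List (A × List A)) (an : A) (pn : List A)
    (hns : ¬ Sat []) (hsz : Sat z)
    (hz' : z' <+: z)
    -- condition (i) of the achievement cause
    (hcondi : ∀ z'', z' <+: z'' → z'' <+: z → Sat z'')
    -- the last element of the chain is ⟨aₙ, pₙ⟩
    (hlast : chain.getLast? = some (an, pn))
    -- ⟨aₙ, pₙ⟩ is a direct cause pair
    (hpa : (pn ++ [an]) <+: z)
    (hnp : ¬ Sat pn)
    (hdir : ∀ z'', (pn ++ [an]) <+: z'' → z'' <+: z → Sat z'')
    -- every pair of the chain occurs within the last pair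
    (hwithin : ∀ pr ∈ chain, (pr.2 ++ [pr.1]) <+: (pn ++ [an])) :
    ∀ pr ∈ chain, (pr.2 ++ [pr.1]) <+: z' :=
  bschain_subset_chain_general z z' Sat chain an pn hz' hcondi hpa hnp hwithin
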